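/- arXiv:2404.14927 — 5 statements merged into one kernel-verified Lean document; each statement's English description precedes it below -/
import Mathlib

section
/- Suppose V: (0,1) → ℝ satisfies the ODE (1-μ)μλV'(μ) + μλV(μ) = μλ(v - t_b) - k on (q, 1), where q = k/(λ(v - t_b)), with boundary conditions V(q) = 0 and V'(q) = 0 (value matching and smooth pasting). Then V is given by V(μ) = μ(v - t_b) - k/λ - (1-μ)(k/λ)[log(μ/(1-μ)) - log(q/(1-q))]. -/
set_option maxHeartbeats 1000000


/-- The solution of (1-μ)μλV' + μλV = μλ(v-t_b) - k on (q,1), with q = k/(λ(v-t_b)),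
value matching V(q)=0 and smooth pasting V'(q)=0, is
V(μ) = μ(v-t_b) - k/λ - (1-μ)(k/λ)[log(μ/(1-μ)) - log(q/(1-q))]. -/
theorem stmt4 (k lam v tb : ℝ) (hk : 0 < k) (hl : 0 < lam) (hv : 0 < v)
    (ht : 0 < tb) (ht2 : tb < v - k/lam)
    (q : ℝ) (hqdef : q = k/(lam*(v - tb)))
    (V dV : ℝ → ℝ)
    (hderiv : ∀ μ ∈ Set.Ioo q 1, HasDerivAt V (dV μ) μ)
    (hode : ∀ μ ∈ Set.Ioo q 1,
      (1-μ)*μ*lam*(dV μ) + μ*lam*(V μ) = μ*lam*(v - tb) - k)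
    (hcont : ContinuousWithinAt V (Set.Ici q) q)
    (hVq : V q = 0) (hdVq : dV q = 0) :
    ∀ μ ∈ Set.Ioo q 1,
      V μ = μ*(v-tb) - k/lam
        - (1-μ)*(k/lam)*(Real.log (μ/(1-μ)) - Real.log (q/(1-q))) := by
  have hkl : 0 < k / lam := div_pos hk hl
  have hvt : 0 < v - tb := by linarith
  have hklam : k < lam * (v - tb) := by
    have h : k / lam < v - tb := by linarith
    calc k = lam * (k/lam) := by field_simp
    _ < lam * (v - tb) := mul_lt_mul_of_pos_left h hl
  have hq0 : 0 < q := by rw [hqdef]; positivity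
  have hq1 : q < 1 := by
    rw [hqdef, div_lt_one (by positivity)]; exact hklam
  have h1q : 0 < 1 - q := by linarith
  set Flog : ℝ → ℝ := fun x => Real.log x - Real.log (1 - x) with hFlogdef
  set F : ℝ → ℝ := fun x => x*(v-tb) - k/lam - (1-x)*(k/lam)*(Flog x - Flog q) with hFdef
  set dF : ℝ → ℝ := fun x => (v-tb) + (k/lam)*(Flog x - Flog q) - (1-x)*(k/lam)*(1/x + 1/(1-x)) with hdFdef
  have hFq : F q = 0 := by
    have hq : q * (v - tb) = k / lam := by
      rw [hqdef]; field_simp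
    simp only [hFdef, sub_self, mul_zero, sub_zero, hq]
  have hFderiv : ∀ μ ∈ Set.Ioo q 1, HasDerivAt F (dF μ) μ := by
    intro μ hμ
    obtain ⟨hμq, hμ1⟩ := hμ
    have hμ0 : 0 < μ := lt_trans hq0 hμq
    have h1μ : 0 < 1 - μ := by linarith
    have hlog1 : HasDerivAt (fun x : ℝ => Real.log x) μ⁻¹ μ :=
      Real.hasDerivAt_log (ne_of_gt hμ0)
    have hlin : HasDerivAt (fun x : ℝ => 1 - x) (-1) μ := by
      simpa using (hasDerivAt_id μ).const_sub 1
    have hlog2 : HasDerivAt (fun x : ℝ => Real.log (1 - x)) ((1-μ)⁻¹ * (-1)) μ :=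
      (Real.hasDerivAt_log (ne_of_gt h1μ)).comp μ hlin
    have hFlogd : HasDerivAt Flog (μ⁻¹ - (1-μ)⁻¹ * (-1)) μ := hlog1.sub hlog2
    have h3 : HasDerivAt (fun x => (1-x)*(k/lam)*(Flog x - Flog q))
        (-1 * (k/lam) * (Flog μ - Flog q) + (1-μ)*(k/lam) * (μ⁻¹ - (1-μ)⁻¹ * -1)) μ :=
      (hlin.mul_const (k/lam)).mul (hFlogd.sub_const (Flog q))
    have h5 : HasDerivAt (fun x : ℝ => x*(v-tb) - k/lam) (v-tb) μ := by
      simpa using ((hasDerivAt_id μ).mul_const (v-tb)).sub_const (k/lam)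
    have h4 : HasDerivAt (fun x => x*(v-tb) - k/lam - (1-x)*(k/lam)*(Flog x - Flog q)) _ μ := h5.sub h3
    convert h4 using 1
    simp only [hdFdef]
    field_simp
    ring
  have hFode : ∀ μ ∈ Set.Ioo q 1,
      (1-μ)*μ*lam*(dF μ) + μ*lam*(F μ) = μ*lam*(v-tb) - k := by
    rintro μ ⟨hμq, hμ1⟩
    have hμ0 : 0 < μ := lt_trans hq0 hμq
    have h1μ : 0 < 1 - μ := by linarith
    simp only [hFdef, hdFdef]
    field_simp
    ring
  set g : ℝ → ℝ := fun x => (V x - F x)/(1-x) with hgdef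
  have hgderiv : ∀ μ ∈ Set.Ioo q 1, HasDerivAt g 0 μ := by
    rintro μ ⟨hμq, hμ1⟩
    have hμ0 : 0 < μ := lt_trans hq0 hμq
    have h1μ : 0 < 1 - μ := by linarith
    have hnum : HasDerivAt (fun x => V x - F x) (dV μ - dF μ) μ :=
      (hderiv μ ⟨hμq, hμ1⟩).sub (hFderiv μ ⟨hμq, hμ1⟩)
    have hden : HasDerivAt (fun x : ℝ => 1 - x) (-1) μ := by
      simpa using (hasDerivAt_id μ).const_sub 1
    have hd := hnum.div hden (ne_of_gt h1μ)
    have h3 : μ * lam * ((1-μ)*(dV μ - dF μ) + (V μ - F μ)) = 0 := by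
      linear_combination (hode μ ⟨hμq, hμ1⟩) - (hFode μ ⟨hμq, hμ1⟩)
    have key : (1-μ)*(dV μ - dF μ) + (V μ - F μ) = 0 :=
      (mul_eq_zero.mp h3).resolve_left (by positivity)
    have hz : ((dV μ - dF μ) * (1-μ) - (V μ - F μ) * (-1)) / (1-μ)^2 = 0 := by
      rw [div_eq_zero_iff]; left; linarith
    rw [← hz]; exact hd
  have hFlogc : ContinuousAt Flog q :=
    (Real.continuousAt_log (ne_of_gt hq0)).sub
      ((Real.continuousAt_log (ne_of_gt h1q)).comp (continuousAt_const.sub continuousAt_id))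
  have hFc : ContinuousAt F q := by
    exact ((continuousAt_id.mul continuousAt_const).sub continuousAt_const).sub
      (((continuousAt_const.sub continuousAt_id).mul continuousAt_const).mul
        (hFlogc.sub continuousAt_const))
  rintro μ ⟨hμq, hμ1⟩
  have hμ0 : 0 < μ := lt_trans hq0 hμq
  have h1μ : 0 < 1 - μ := by linarith
  have hgcont : ContinuousOn g (Set.Icc q μ) := by
    intro x hx
    rcases eq_or_lt_of_le hx.1 with heq | hlt
    · subst heq
      have hVc : ContinuousWithinAt V (Set.Icc q μ) q :=
        hcont.mono Set.Icc_subset_Ici_self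
      exact (hVc.sub hFc.continuousWithinAt).div
        ((continuousAt_const.sub continuousAt_id).continuousWithinAt) (by simp; linarith)
    · have hx1 : x < 1 := lt_of_le_of_lt hx.2 hμ1
      exact ((hgderiv x ⟨hlt, hx1⟩).continuousAt).continuousWithinAt
  obtain ⟨c, hc, hceq⟩ := exists_hasDerivAt_eq_slope g (fun _ => (0:ℝ)) hμq hgcont
    (fun x hx => hgderiv x ⟨hx.1, lt_trans hx.2 hμ1⟩)
  have hgq : g q = 0 := by simp [hgdef, hVq, hFq]
  have hgμ : g μ = 0 := by
    have hne : μ - q ≠ 0 := by linarith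
    have := hceq.symm
    rw [hgq, sub_zero] at this
    exact (div_eq_zero_iff.mp this).resolve_right hne
  have hVF : V μ = F μ := by
    have h1 : (V μ - F μ)/(1-μ) = 0 := hgμ
    have := (div_eq_zero_iff.mp h1).resolve_right (by linarith)
    linarith
  rw [hVF]
  simp only [hFdef, hFlogdef]
  rw [Real.log_div (ne_of_gt hμ0) (ne_of_gt h1μ), Real.log_div (ne_of_gt hq0) (ne_of_gt h1q)]
end

section
/- Let V(μ; t_b) = μ(v - t_b) - k/λ - (1-μ)(k/λ)[log(μ/(1-μ)) - log(q/(1-q))] with q = k/(λ(v-t_b)) ∈ (0,1). Then for every β ∈ (q, 1): β·V'(β; t_b) - V(β; t_b) = ∫_q^β k/(λμ(1-μ)) dμ, where V' denotes the derivative in μ. -/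
/-- For the closed-form continuation value V, for every β ∈ (q,1):
β·V'(β) - V(β) = ∫_q^β k/(λμ(1-μ)) dμ. -/
theorem stmt5 (k lam v tb : ℝ) (hk : 0 < k) (hl : 0 < lam) (hv : 0 < v)
    (ht : 0 < tb) (ht2 : tb < v - k/lam) :
    let q : ℝ := k/(lam*(v-tb))
    let V : ℝ → ℝ := fun μ => μ*(v-tb) - k/lam
      - (1-μ)*(k/lam)*(Real.log (μ/(1-μ)) - Real.log (q/(1-q)))
    ∀ β ∈ Set.Ioo q 1,
      β * deriv V β - V β = ∫ μ in q..β, k/(lam*μ*(1-μ)) := by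
  intro q V β hβ
  have hvt : 0 < v - tb := by
    have : 0 < k / lam := div_pos hk hl
    linarith
  have hq0 : 0 < q := div_pos hk (mul_pos hl hvt)
  have hq1 : q < 1 := by
    rw [div_lt_one (mul_pos hl hvt)]
    have h2 : k / lam < v - tb := by linarith
    calc k = lam * (k / lam) := by field_simp
    _ < lam * (v - tb) := by exact (mul_lt_mul_iff_right₀ hl).mpr h2
  obtain ⟨hβq, hβ1⟩ := hβ
  have hβ0 : 0 < β := hq0.trans hβq
  have hβ1' : 0 < 1 - β := by linarith
  set C : ℝ := Real.log (q/(1-q)) with hC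
  set W : ℝ → ℝ := fun μ => μ*(v-tb) - k/lam
      - (1-μ)*(k/lam)*((Real.log μ - Real.log (1-μ)) - C) with hW
  have hVW : V =ᶠ[nhds β] W := by
    filter_upwards [isOpen_Ioo.mem_nhds (show β ∈ Set.Ioo (0:ℝ) 1 from ⟨hβ0, hβ1⟩)] with μ hμ
    simp only [V, W]
    rw [Real.log_div hμ.1.ne' (by linarith [hμ.2] : (1:ℝ) - μ ≠ 0)]
  -- derivative of W at β
  have h1 : HasDerivAt (fun μ : ℝ => Real.log μ) (1/β) β := by
    simpa using Real.hasDerivAt_log hβ0.ne'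
  have h2 : HasDerivAt (fun μ : ℝ => Real.log (1-μ)) (-(1/(1-β))) β := by
    have hin : HasDerivAt (fun μ : ℝ => 1 - μ) (-1) β := by
      simpa using (hasDerivAt_id β).const_sub 1
    have := (Real.hasDerivAt_log hβ1'.ne').comp β hin
    exact this.congr_deriv (by ring)
  have h3 : HasDerivAt (fun μ : ℝ => (Real.log μ - Real.log (1-μ)) - C)
      (1/β + 1/(1-β)) β := by
    simpa using ((h1.sub h2).sub_const C)
  have h4 : HasDerivAt (fun μ : ℝ => (1-μ)*(k/lam)) (-(k/lam)) β := by
    have hin : HasDerivAt (fun μ : ℝ => 1 - μ) (-1) β := by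
      simpa using (hasDerivAt_id β).const_sub 1
    simpa using hin.mul_const (k/lam)
  have h5 : HasDerivAt (fun μ : ℝ => μ*(v-tb) - k/lam) (v-tb) β := by
    simpa using ((hasDerivAt_id β).mul_const (v-tb)).sub_const (k/lam)
  have hWd : HasDerivAt W
      ((v-tb) - ((-(k/lam)) * ((Real.log β - Real.log (1-β)) - C)
        + (1-β)*(k/lam) * (1/β + 1/(1-β)))) β := h5.sub (h4.mul h3)
  have hderiv : deriv V β = (v-tb) - ((-(k/lam)) * ((Real.log β - Real.log (1-β)) - C)
        + (1-β)*(k/lam) * (1/β + 1/(1-β))) := by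
    rw [hVW.deriv_eq, hWd.deriv]
  -- integral
  set F : ℝ → ℝ := fun μ => (k/lam) * (Real.log μ - Real.log (1-μ)) with hF
  have hsub : Set.uIcc q β ⊆ Set.Ioo (0:ℝ) 1 := by
    rw [Set.uIcc_of_le hβq.le]
    intro x hx
    exact ⟨hq0.trans_le hx.1, lt_of_le_of_lt hx.2 hβ1⟩
  have hFd : ∀ x ∈ Set.uIcc q β, HasDerivAt F (k/(lam*x*(1-x))) x := by
    intro x hx
    obtain ⟨hx0, hx1⟩ := hsub hx
    have hx1' : 0 < 1 - x := by linarith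
    have hl1 : HasDerivAt (fun μ : ℝ => Real.log μ) (1/x) x := by
      simpa using Real.hasDerivAt_log hx0.ne'
    have hl2 : HasDerivAt (fun μ : ℝ => Real.log (1-μ)) (-(1/(1-x))) x := by
      have hin : HasDerivAt (fun μ : ℝ => 1 - μ) (-1) x := by
        simpa using (hasDerivAt_id x).const_sub 1
      have := (Real.hasDerivAt_log hx1'.ne').comp x hin
      exact this.congr_deriv (by ring)
    have := ((hl1.sub hl2).const_mul (k/lam))
    refine this.congr_deriv ?_
    field_simp
    ring
  have hcont : IntervalIntegrable (fun μ => k/(lam*μ*(1-μ))) MeasureTheory.volume q β := by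
    apply ContinuousOn.intervalIntegrable
    apply ContinuousOn.div continuousOn_const
    · fun_prop
    · intro x hx
      obtain ⟨hx0, hx1⟩ := hsub hx
      have : 0 < 1 - x := by linarith
      positivity
  have hint : (∫ μ in q..β, k/(lam*μ*(1-μ))) = F β - F q :=
    intervalIntegral.integral_eq_sub_of_hasDerivAt hFd hcont
  rw [hderiv, hint]
  simp only [F, V, hC]
  rw [Real.log_div hβ0.ne' hβ1'.ne', Real.log_div hq0.ne' (by linarith : (1:ℝ) - q ≠ 0)]
  field_simp
  ring
end

section
/- Fix k, λ, v > 0 with 4k < λv, and μ₀ = 1/2. For price t_b, let q = k/(λ(v - t_b)) and t_r(β) = ∫_q^β k/(λμ(1-μ))dμ, t(1) = t_b. The first-order condition t_r'(β)/(t_b - t_r(β)) = 1/(1-β) is satisfied at β = 2k/(λv) when t_b = v/2, i.e., at t_b = v/2 the interior optimal stopping belief coincides with the quitting belief q(v/2) = 2k/(λv). -/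
/-- With μ₀ = 1/2, at price t_b = v/2 the first-order condition
t_r'(β)/(t_b - t_r(β)) = 1/(1-β) holds at β = 2k/(λv), which coincides with the
quitting belief q(v/2). -/
theorem stmt10 (k lam v : ℝ) (hk : 0 < k) (hl : 0 < lam) (hv : 0 < v)
    (h4 : 4*k < lam*v) :
    let tb : ℝ := v/2
    let q : ℝ := k/(lam*(v - tb))
    let β : ℝ := 2*k/(lam*v)
    β = q ∧
    (k/(lam*β*(1-β))) / (tb - ∫ μ in q..β, k/(lam*μ*(1-μ))) = 1/(1-β) := by
  intro tb q β
  have hlv : 0 < lam * v := by positivity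
  have hl0 := hl.ne'
  have hv0 := hv.ne'
  have heq : β = q := by
    show 2*k/(lam*v) = k/(lam*(v - v/2))
    rw [show lam*(v - v/2) = lam*v/2 by ring, div_div_eq_mul_div, mul_comm]
  refine ⟨heq, ?_⟩
  rw [show (∫ μ in q..β, k/(lam*μ*(1-μ))) = 0 from by
        rw [heq]; exact intervalIntegral.integral_same, sub_zero]
  have hd : lam*v - 2*k ≠ 0 := by nlinarith
  show (k/(lam*(2*k/(lam*v))*(1-2*k/(lam*v)))) / (v/2) = 1/(1-2*k/(lam*v))
  rw [show 1 - 2*k/(lam*v) = (lam*v - 2*k)/(lam*v) from by field_simp]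
  field_simp
end

section
/- Let β^o(t_b) ∈ (q(t_b), 1/2] solve the first-order condition MC(β)/(t_b - ∫_{q(t_b)}^β MC(μ)dμ) = 1/(1-β), where MC(μ) = k/(λμ(1-μ)) and q(t_b) = k/(λ(v-t_b)). Then by implicit differentiation, (β^o)'(t_b) = (β^o)²(1-β^o) / [(2β^o - 1)(1-q(t_b))·k/λ], which is ≤ 0 whenever β^o ≤ 1/2. -/
lemma integral_MC (k lam x y : ℝ) (hl : 0 < lam) (hx0 : 0 < x) (hx1 : x < 1)
    (hy0 : 0 < y) (hy1 : y < 1) :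
    ∫ μ in x..y, k/(lam*μ*(1-μ))
      = k/lam * ((Real.log y - Real.log (1-y)) - (Real.log x - Real.log (1-x))) := by
  have hbounds : ∀ μ ∈ Set.uIcc x y, 0 < μ ∧ μ < 1 := by
    intro μ hμ
    constructor
    · exact lt_of_lt_of_le (lt_min hx0 hy0) hμ.1
    · exact lt_of_le_of_lt hμ.2 (max_lt hx1 hy1)
  have key : ∀ μ ∈ Set.uIcc x y,
      HasDerivAt (fun μ => k/lam * (Real.log μ - Real.log (1-μ))) (k/(lam*μ*(1-μ))) μ := by
    intro μ hμ
    obtain ⟨h0, h1⟩ := hbounds μ hμ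
    have h1m : (0:ℝ) < 1 - μ := by linarith
    have d1 : HasDerivAt (fun μ : ℝ => Real.log μ) μ⁻¹ μ := Real.hasDerivAt_log h0.ne'
    have d2 : HasDerivAt (fun μ : ℝ => (1:ℝ) - μ) (-1) μ := (hasDerivAt_id μ).const_sub 1
    have d3 : HasDerivAt (fun μ : ℝ => Real.log (1-μ)) (-1/(1-μ)) μ := d2.log h1m.ne'
    have d4 := ((d1.sub d3).const_mul (k/lam))
    refine d4.congr_deriv ?_
    have h1m' : (1-μ) ≠ 0 := h1m.ne'
    have h0' : μ ≠ 0 := h0.ne'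
    field_simp
    ring
  have hint : IntervalIntegrable (fun μ => k/(lam*μ*(1-μ))) MeasureTheory.volume x y := by
    apply ContinuousOn.intervalIntegrable
    apply ContinuousOn.div continuousOn_const
    · fun_prop
    · intro μ hμ
      obtain ⟨h0, h1⟩ := hbounds μ hμ
      have : (0:ℝ) < 1 - μ := by linarith
      positivity
  rw [intervalIntegral.integral_eq_sub_of_hasDerivAt key hint]
  ring

/-- Implicit differentiation of the first-order condition gives
(β^o)'(t_b) = (β^o)²(1-β^o)/((2β^o-1)(1-q(t_b))·k/λ), which is ≤ 0 when β^o ≤ 1/2. -/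
theorem stmt11 (k lam v : ℝ) (hk : 0 < k) (hl : 0 < lam) (hv : 0 < v)
    (h4 : 4*k < lam*v) (βo : ℝ → ℝ) (s : Set ℝ) (hs : IsOpen s)
    (hrange : ∀ t ∈ s, t < v - k/lam ∧ k/(lam*(v-t)) < βo t ∧ βo t ≤ 1/2)
    (hdiff : ∀ t ∈ s, DifferentiableAt ℝ βo t)
    (hfoc : ∀ t ∈ s,
      (k/(lam*(βo t)*(1-βo t)))
        / (t - ∫ μ in (k/(lam*(v-t)))..(βo t), k/(lam*μ*(1-μ)))
      = 1/(1-βo t)) :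
    ∀ t ∈ s,
      deriv βo t
        = (βo t)^2*(1-βo t) / ((2*βo t - 1)*(1 - k/(lam*(v-t)))*(k/lam)) ∧
      deriv βo t ≤ 0 := by
  -- basic bounds at any point of s
  have hbnd : ∀ t ∈ s, 0 < v - t ∧ 0 < k/(lam*(v-t)) ∧ k/(lam*(v-t)) < 1 ∧
      0 < βo t ∧ βo t < 1 := by
    intro t ht
    obtain ⟨ht1, ht2, ht3⟩ := hrange t ht
    have hkl : 0 < k/lam := by positivity
    have hvt : k/lam < v - t := by linarith
    have hvt0 : 0 < v - t := lt_trans hkl hvt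
    have hq0 : 0 < k/(lam*(v-t)) := by positivity
    have hq1 : k/(lam*(v-t)) < 1 := by
      rw [div_lt_one (by positivity)]
      calc k = lam * (k/lam) := by field_simp
        _ < lam * (v - t) := (mul_lt_mul_iff_right₀ hl).mpr hvt
    exact ⟨hvt0, hq0, hq1, lt_trans hq0 ht2, lt_of_le_of_lt ht3 (by norm_num)⟩
  -- the FOC in explicit form:  L t = R t on s
  have hEq : ∀ t ∈ s,
      t - k/lam * ((Real.log (βo t) - Real.log (1 - βo t))
          - (Real.log (k/(lam*(v-t))) - Real.log (1 - k/(lam*(v-t)))))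
        = k/lam * (βo t)⁻¹ := by
    intro t ht
    obtain ⟨hvt0, hq0, hq1, hb0, hb1⟩ := hbnd t ht
    obtain ⟨ht1, ht2, ht3⟩ := hrange t ht
    have hI := integral_MC k lam (k/(lam*(v-t))) (βo t) hl hq0 hq1 hb0 hb1
    have hfoc' := hfoc t ht
    rw [hI] at hfoc'
    set I := k/lam * ((Real.log (βo t) - Real.log (1-βo t))
        - (Real.log (k/(lam*(v-t))) - Real.log (1 - k/(lam*(v-t))))) with hIdef
    have h1b : (0:ℝ) < 1 - βo t := by linarith
    have hden : t - I ≠ 0 := by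
      intro h
      rw [h, div_zero] at hfoc'
      have h2 : (0:ℝ) < 1/(1-βo t) := by positivity
      rw [← hfoc'] at h2
      exact lt_irrefl 0 h2
    rw [div_eq_div_iff hden h1b.ne'] at hfoc'
    have hb0' : βo t ≠ 0 := hb0.ne'
    have hl' : lam ≠ 0 := hl.ne'
    field_simp at hfoc' ⊢
    nlinarith [hfoc']
  intro t ht
  obtain ⟨hvt0, hq0, hq1, hb0, hb1⟩ := hbnd t ht
  have h1b : (0:ℝ) < 1 - βo t := by linarith
  have h1q : (0:ℝ) < 1 - k/(lam*(v-t)) := by linarith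
  set b := βo t with hbdef
  set q := k/(lam*(v-t)) with hqdef
  set β' := deriv βo t with hβ'def
  have hb' : HasDerivAt βo β' t := (hdiff t ht).hasDerivAt
  -- derivative of the left side L
  have d1 : HasDerivAt (fun x => Real.log (βo x)) (β'/b) t := hb'.log hb0.ne'
  have d2 : HasDerivAt (fun x => Real.log (1 - βo x)) (-β'/(1-b)) t :=
    (hb'.const_sub 1).log h1b.ne'
  have hden : HasDerivAt (fun x => lam*(v-x)) (lam * (-1)) t :=
    ((hasDerivAt_id t).const_sub v).const_mul lam
  have hdne : lam*(v-t) ≠ 0 := by positivity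
  have dq : HasDerivAt (fun x => k/(lam*(v-x)))
      ((0 * (lam*(v-t)) - k * (lam * (-1))) / (lam*(v-t))^2) t :=
    (hasDerivAt_const t k).div hden hdne
  set q' : ℝ := (0 * (lam*(v-t)) - k * (lam * (-1))) / (lam*(v-t))^2 with hq'def
  have hq'pos : 0 < q' := by
    rw [hq'def]
    have : (0 * (lam*(v-t)) - k * (lam * (-1))) = k * lam := by ring
    rw [this]
    positivity
  have d3 : HasDerivAt (fun x => Real.log (k/(lam*(v-x)))) (q'/q) t := dq.log hq0.ne'
  have d4 : HasDerivAt (fun x => Real.log (1 - k/(lam*(v-x)))) (-q'/(1-q)) t :=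
    (dq.const_sub 1).log h1q.ne'
  have hL : HasDerivAt (fun x => x - k/lam * ((Real.log (βo x) - Real.log (1 - βo x))
      - (Real.log (k/(lam*(v-x))) - Real.log (1 - k/(lam*(v-x))))))
      (1 - k/lam * ((β'/b - (-β'/(1-b))) - (q'/q - (-q'/(1-q))))) t :=
    (hasDerivAt_id t).sub (((d1.sub d2).sub (d3.sub d4)).const_mul (k/lam))
  have hR : HasDerivAt (fun x => k/lam * (βo x)⁻¹) (k/lam * (-β'/b^2)) t :=
    (hb'.inv hb0.ne').const_mul (k/lam)
  -- the two functions agree near t, so the derivatives agree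
  have heq : (fun x => x - k/lam * ((Real.log (βo x) - Real.log (1 - βo x))
      - (Real.log (k/(lam*(v-x))) - Real.log (1 - k/(lam*(v-x))))))
      =ᶠ[nhds t] (fun x => k/lam * (βo x)⁻¹) :=
    Filter.eventuallyEq_of_mem (hs.mem_nhds ht) hEq
  have hL2 : HasDerivAt (fun x => x - k/lam * ((Real.log (βo x) - Real.log (1 - βo x))
      - (Real.log (k/(lam*(v-x))) - Real.log (1 - k/(lam*(v-x))))))
      (k/lam * (-β'/b^2)) t := hR.congr_of_eventuallyEq heq
  have hders : 1 - k/lam * ((β'/b - (-β'/(1-b))) - (q'/q - (-q'/(1-q))))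
      = k/lam * (-β'/b^2) := hL.unique hL2
  -- simplify: q'/q and q'/(1-q)
  have hkq' : k * q' = lam * q^2 := by
    rw [hq'def, hqdef]
    field_simp
    ring
  clear_value b q q' β'
  have key : β' * ((2*b-1)*(1-q)*(k/lam)) = b^2*(1-b) := by
    have hlne : lam ≠ 0 := hl.ne'
    have hbne : b ≠ 0 := hb0.ne'
    have hqne : q ≠ 0 := hq0.ne'
    have h1bne : (1:ℝ) - b ≠ 0 := h1b.ne'
    have h1qne : (1:ℝ) - q ≠ 0 := h1q.ne'
    field_simp at hders
    have key0 : β' * ((2*b-1)*(1-q)*k) * (lam*b*q) = b^2*(1-b)*lam * (lam*b*q) := by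
      linear_combination (-lam*b) * hders + (lam*b^3*(1-b)) * hkq'
    have key1 : β' * ((2*b-1)*(1-q)*k) = b^2*(1-b)*lam :=
      mul_right_cancel₀ (by positivity) key0
    field_simp
    linear_combination key1
  have hb12 : b ≤ 1/2 := hbdef ▸ (hrange t ht).2.2
  have hblt : b < 1/2 := by
    rcases lt_or_eq_of_le hb12 with h | h
    · exact h
    · exfalso
      rw [h] at key
      norm_num at key
  have hkl : (0:ℝ) < k/lam := by positivity
  have hDneg : (2*b-1)*(1-q)*(k/lam) < 0 := by
    have h1 : 2*b-1 < 0 := by linarith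
    have := mul_pos h1q hkl
    nlinarith
  constructor
  · rw [eq_div_iff hDneg.ne]
    exact key
  · nlinarith [key, sq_nonneg b, mul_pos (mul_pos hb0 hb0) h1b]
end

section
/- Fix k, λ, v > 0 with 4k < λv, and μ₀ ∈ (0,1). Define Π(t_b) = ((μ₀ - q(t_b))/(1 - q(t_b)))·t_b with q(t_b) = k/(λ(v - t_b)). The unconstrained maximizer of Π over {t_b : q(t_b) < μ₀} is t_b^F = v - k/λ - sqrt( (k/λ)(v - k/λ)(1-μ₀)/μ₀ ). -/
set_option maxHeartbeats 1000000 in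
/-- The unconstrained maximizer of the free-return revenue
Π(t_b) = ((μ₀-q(t_b))/(1-q(t_b)))·t_b over {t_b : q(t_b) < μ₀} is
t_b^F = v - k/λ - sqrt((k/λ)(v-k/λ)(1-μ₀)/μ₀). -/
theorem stmt14 (k lam v μ₀ : ℝ) (hk : 0 < k) (hl : 0 < lam) (hv : 0 < v)
    (h4 : 4*k < lam*v) (hμ : μ₀ ∈ Set.Ioo (0:ℝ) 1) (hfeas : k/lam < μ₀*v) :
    let q : ℝ → ℝ := fun t => k/(lam*(v-t))
    let Rev : ℝ → ℝ := fun t => ((μ₀ - q t)/(1 - q t)) * t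
    let tF : ℝ := v - k/lam - Real.sqrt ((k/lam)*(v - k/lam)*(1-μ₀)/μ₀)
    (tF < v ∧ q tF < μ₀) ∧
    ∀ t, t < v → q t < μ₀ → Rev t ≤ Rev tF := by
  intro q Rev tF
  obtain ⟨hμ0, hμ1⟩ := hμ
  have hc : 0 < k/lam := div_pos hk hl
  set c : ℝ := k/lam with hc_def
  have hkc : k = c * lam := by rw [hc_def, div_mul_cancel₀ k hl.ne']
  have hcv : c < v := by
    rw [hc_def, div_lt_iff₀ hl]; nlinarith
  have h1μ : 0 < 1 - μ₀ := by linarith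
  have hvc : 0 < v - c := by linarith
  have harg : 0 < c*(v - c)*(1-μ₀)/μ₀ := div_pos (by positivity) hμ0
  set S : ℝ := Real.sqrt (c*(v - c)*(1-μ₀)/μ₀) with hS_def
  have hSpos : 0 < S := Real.sqrt_pos.mpr harg
  have hS2 : S^2 = c*(v - c)*(1-μ₀)/μ₀ := Real.sq_sqrt harg.le
  have hkey : μ₀ * S^2 = c*(v - c)*(1-μ₀) := by
    rw [hS2]; field_simp
  have htF : tF = v - c - S := rfl
  -- c(1-μ₀) < μ₀ S
  have hAS : c*(1-μ₀) < μ₀ * S := by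
    nlinarith [mul_pos hμ0 hSpos, mul_pos (mul_pos hc h1μ) (sub_pos.mpr hfeas)]
  -- a useful lemma rewriting q and Rev at a point t with s = v - t
  have hq_eq : ∀ t : ℝ, v - t ≠ 0 → q t = c / (v - t) := by
    intro t ht
    show k/(lam*(v-t)) = c/(v-t)
    rw [hc_def, div_div]
  have hRev : ∀ t : ℝ, 0 < v - t → c < μ₀*(v - t) →
      Rev t = (μ₀*(v-t) - c)/((v-t) - c) * t := by
    intro t hs hcs
    have hs0 : (v - t) ≠ 0 := ne_of_gt hs
    have hsc : 0 < (v - t) - c := by nlinarith [mul_lt_of_lt_one_left hs hμ1]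
    show ((μ₀ - q t)/(1 - q t)) * t = (μ₀*(v-t) - c)/((v-t) - c) * t
    rw [hq_eq t hs0]
    congr 1
    rw [div_eq_div_iff (by
      have h : 1 - c/(v-t) = ((v-t)-c)/(v-t) := by field_simp
      rw [h]; exact ne_of_gt (div_pos hsc hs)) (ne_of_gt hsc)]
    field_simp
  -- basic facts about tF
  have htFv : v - tF = c + S := by rw [htF]; ring
  have htFs : 0 < v - tF := by rw [htFv]; positivity
  have htFc : c < μ₀*(v - tF) := by rw [htFv]; nlinarith
  have hqtF : q tF < μ₀ := by
    rw [hq_eq tF (ne_of_gt htFs), htFv, div_lt_iff₀ (by positivity)]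
    nlinarith
  refine ⟨⟨by rw [htF]; nlinarith, hqtF⟩, ?_⟩
  intro t ht hqt
  have hs : 0 < v - t := by linarith
  have hcs : c < μ₀*(v - t) := by
    have := hqt
    rw [hq_eq t (ne_of_gt hs), div_lt_iff₀ hs] at this
    linarith [this]
  have husc : 0 < (v - t) - c := by nlinarith [mul_lt_of_lt_one_left hs hμ1]
  rw [hRev t hs hcs, hRev tF htFs htFc, htFv]
  have htFt : tF = v - (c + S) := by rw [htF]; ring
  rw [htFt]
  have hdenF : (c + S) - c = S := by ring
  rw [hdenF]
  rw [div_mul_eq_mul_div, div_mul_eq_mul_div, div_le_div_iff₀ husc hSpos]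
  set s : ℝ := v - t with hsdef
  have hts : t = v - s := by rw [hsdef]; ring
  rw [hts]
  nlinarith [mul_nonneg (mul_nonneg hμ0.le hSpos.le) (sq_nonneg (s - c - S)), hkey]
end
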